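/- Define cap_d(k) = (k!/k^k) ∑_{j_1+⋯+j_d=k} ∏_{m=1}^d j_m^{j_m}/j_m! (sum over nonnegative integer compositions, with 0^0=1). Then for d > 2, cap_d(k) = cap_{d-1}(k) + (k/(d−2)) cap_{d-2}(k). -/

import Mathlib

open scoped BigOperators

section AbelPart

open Polynomial Finset



lemma findiff (n : ℕ) : ∀ p : ℝ[X], p.degree < n →
    ∑ k ∈ range (n+1), (-1:ℝ)^k * (n.choose k) * p.eval (k:ℝ) = 0 := by
  induction n with
  | zero =>
    intro p hp
    have hp0 : p = 0 := by
      rw [← Polynomial.degree_eq_bot]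
      exact Nat.WithBot.lt_zero_iff.mp (by simpa using hp)
    simp [hp0]
  | succ n ih =>
    intro p hp
    have hdeg : p.degree ≤ n := Order.lt_succ_iff.mp (by exact_mod_cast hp)
    set q : ℝ[X] := p - taylor 1 p with hq
    have hqdeg : q.degree < n := by
      rcases eq_or_ne p 0 with h0 | h0
      · have : q = 0 := by simp [hq, h0]
        rw [this, degree_zero]
        exact WithBot.bot_lt_coe n
      rcases Nat.eq_zero_or_pos p.natDegree with hd0 | hdpos
      · obtain ⟨c, rfl⟩ := Polynomial.natDegree_eq_zero.mp hd0
        have : q = 0 := by simp [hq, taylor_C]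
        rw [this, degree_zero]
        exact WithBot.bot_lt_coe n
      · have htne : taylor 1 p ≠ 0 := by
          intro h
          have h2 := natDegree_taylor p 1
          rw [h, natDegree_zero] at h2
          omega
        have hdd : p.degree = (taylor 1 p).degree := by
          rw [degree_eq_natDegree h0, degree_eq_natDegree htne, natDegree_taylor]
        have hlc : p.leadingCoeff = (taylor 1 p).leadingCoeff := by
          rw [taylor_apply, leadingCoeff_comp (by rw [natDegree_X_add_C]; exact one_ne_zero)]
          rw [leadingCoeff_X_add_C, one_pow, mul_one]
        calc q.degree < p.degree := degree_sub_lt hdd h0 hlc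
          _ ≤ n := hdeg
    have key : ∑ k ∈ range (n+1), (-1:ℝ)^k * (n.choose k) * q.eval (k:ℝ) = 0 := ih q hqdeg
    have hqe : ∀ k : ℕ, q.eval (k:ℝ) = p.eval (k:ℝ) - p.eval ((k:ℝ)+1) := by
      intro k
      simp [hq, taylor_apply, eval_comp]
    set g : ℕ → ℝ := fun k => (-1:ℝ)^k * (n.choose k) * p.eval (k:ℝ) with hg
    set h : ℕ → ℝ := fun k => (-1:ℝ)^(k+1) * (n.choose k) * p.eval ((k:ℝ)+1) with hh
    have hgh : ∀ k : ℕ, (-1:ℝ)^k * (n.choose k) * q.eval (k:ℝ) = g k + h k := by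
      intro k
      rw [hqe k]
      simp only [hg, hh]
      ring
    rw [← key, Finset.sum_congr rfl (fun k _ => hgh k), Finset.sum_add_distrib]
    calc ∑ k ∈ range (n+1+1), (-1:ℝ)^k * ((n+1).choose k) * p.eval (k:ℝ)
        = ∑ k ∈ range (n+1), (-1:ℝ)^(k+1) * ((n+1).choose (k+1)) * p.eval ((k+1:ℕ):ℝ)
          + (-1:ℝ)^0 * ((n+1).choose 0) * p.eval ((0:ℕ):ℝ) :=
          Finset.sum_range_succ' (fun k => (-1:ℝ)^k * ((n+1).choose k) * p.eval (k:ℝ)) (n+1)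
      _ = ∑ k ∈ range (n+1), (g (k+1) + h k) + g 0 := by
          congr 1
          · apply Finset.sum_congr rfl
            intro k _
            simp only [hg, hh, Nat.choose_succ_succ]
            push_cast
            ring
          · simp [hg]
      _ = (∑ k ∈ range (n+1), g (k+1) + g 0) + ∑ k ∈ range (n+1), h k := by
          rw [Finset.sum_add_distrib]; ring
      _ = (∑ k ∈ range (n+1+1), g k) + ∑ k ∈ range (n+1), h k := by
          rw [← Finset.sum_range_succ' g (n+1)]
      _ = (∑ k ∈ range (n+1), g k) + ∑ k ∈ range (n+1), h k := by
          rw [Finset.sum_range_succ]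
          simp [hg, Nat.choose_succ_self]

lemma choose_aux (n k : ℕ) : (n+1) * n.choose (k+1) = (n+1).choose (k+1) * (n - k) := by
  have h1 := Nat.add_one_mul_choose_eq n (k+1)
  have h2 := Nat.choose_succ_right_eq (n+1) (k+1)
  simp only [Nat.succ_eq_add_one, Nat.succ_sub_succ] at h1 h2
  rw [h1, h2]

lemma abel2 : ∀ n : ℕ, 1 ≤ n →
    (∑ k ∈ range n, C ((n.choose (k+1) : ℝ) * ((k+1:ℕ):ℝ)^k) * (X - C ((k+1:ℕ):ℝ))^(n-1-k))
      = C (n:ℝ) * X^(n-1) := by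
  intro n hn
  induction n, hn using Nat.le_induction with
  | base =>
    simp
  | succ n hn ih =>
    set P : ℝ[X] := ∑ k ∈ range (n+1),
      C (((n+1).choose (k+1) : ℝ) * ((k+1:ℕ):ℝ)^k) * (X - C ((k+1:ℕ):ℝ))^(n+1-1-k) with hP
    set R : ℝ[X] := C ((n+1:ℕ):ℝ) * X^(n+1-1) with hR
    have hderiv : derivative (P - R) = 0 := by
      have hdP : derivative P
          = C ((n+1:ℕ):ℝ) * ∑ k ∈ range n,
              C ((n.choose (k+1) : ℝ) * ((k+1:ℕ):ℝ)^k) * (X - C ((k+1:ℕ):ℝ))^(n-1-k) := by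
        rw [hP, derivative_sum]
        have step : ∀ k ∈ range (n+1),
            derivative (C (((n+1).choose (k+1) : ℝ) * ((k+1:ℕ):ℝ)^k) * (X - C ((k+1:ℕ):ℝ))^(n+1-1-k))
            = C (((n+1).choose (k+1) : ℝ) * ((k+1:ℕ):ℝ)^k * ((n-k : ℕ):ℝ))
                * (X - C ((k+1:ℕ):ℝ))^(n-1-k) := by
          intro k hk
          rw [derivative_C_mul, derivative_pow, derivative_X_sub_C]
          have : n + 1 - 1 - k = n - k := by omega
          rw [this]
          have : n - k - 1 = n - 1 - k := by omega
          rw [this, mul_one]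
          simp only [C_mul]
          ring
        rw [Finset.sum_congr rfl step]
        rw [Finset.sum_range_succ]
        rw [Nat.sub_self, Nat.cast_zero, mul_zero, map_zero, zero_mul, add_zero]
        rw [Finset.mul_sum]
        apply Finset.sum_congr rfl
        intro k hk
        have hcast : ((n+1:ℕ):ℝ) * (n.choose (k+1) : ℝ) = ((n+1).choose (k+1) : ℝ) * ((n-k:ℕ):ℝ) := by
          rw [← Nat.cast_mul, ← Nat.cast_mul, choose_aux]
        have hc2 : (((n+1).choose (k+1):ℝ) * ((k+1:ℕ):ℝ)^k) * ((n-k:ℕ):ℝ)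
            = ((n+1:ℕ):ℝ) * ((n.choose (k+1):ℝ) * ((k+1:ℕ):ℝ)^k) := by
          calc (((n+1).choose (k+1):ℝ) * ((k+1:ℕ):ℝ)^k) * ((n-k:ℕ):ℝ)
              = (((n+1).choose (k+1):ℝ) * ((n-k:ℕ):ℝ)) * ((k+1:ℕ):ℝ)^k := by ring
            _ = (((n+1:ℕ):ℝ) * (n.choose (k+1):ℝ)) * ((k+1:ℕ):ℝ)^k := by rw [← hcast]
            _ = ((n+1:ℕ):ℝ) * ((n.choose (k+1):ℝ) * ((k+1:ℕ):ℝ)^k) := by ring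
        rw [hc2, C_mul, mul_assoc]
      have hdR : derivative R = C ((n+1:ℕ):ℝ) * (C (n:ℝ) * X^(n-1)) := by
        rw [hR, derivative_C_mul, derivative_X_pow]
        norm_num
      rw [derivative_sub, hdP, hdR, ih, sub_self]
    have hconst := eq_C_of_derivative_eq_zero hderiv
    have heval0 : (P - R).coeff 0 = 0 := by
      have hcoeff : (P - R).coeff 0 = eval 0 P - eval 0 R := by
        rw [coeff_sub, coeff_zero_eq_eval_zero, coeff_zero_eq_eval_zero]
      have hR0 : eval 0 R = 0 := by
        rw [hR]
        simp [zero_pow (show n ≠ 0 by omega)]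
      have hP0 : eval 0 P = 0 := by
        have hfd := findiff (n+1) (X^n) (by
          rw [degree_X_pow]
          exact_mod_cast Nat.lt_succ_self n)
        rw [Finset.sum_range_succ' (fun k => (-1:ℝ)^k * ((n+1).choose k) * eval (k:ℝ) ((X:ℝ[X])^n)) (n+1)] at hfd
        simp only [eval_pow, eval_X, Nat.cast_zero, pow_zero, one_mul, Nat.choose_zero_right,
          Nat.cast_one] at hfd
        rw [zero_pow (show n ≠ 0 by omega), add_zero] at hfd
        -- hfd : ∑ k ∈ range (n+1), (-1)^(k+1) * ((n+1).choose (k+1)) * ((k+1:ℕ):ℝ)^n = 0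
        rw [hP, eval_finset_sum]
        have : ∀ k ∈ range (n+1),
            eval 0 (C (((n+1).choose (k+1) : ℝ) * ((k+1:ℕ):ℝ)^k) * (X - C ((k+1:ℕ):ℝ))^(n+1-1-k))
            = (-1:ℝ)^(n+1) * ((-1:ℝ)^(k+1) * ((n+1).choose (k+1)) * ((k+1:ℕ):ℝ)^n) := by
          intro k hk
          rw [mem_range] at hk
          rw [eval_mul, eval_C, eval_pow, eval_sub, eval_X, eval_C, zero_sub]
          rw [show n+1-1-k = n-k by omega]
          rw [neg_pow]
          have hsplit : ((k+1:ℕ):ℝ)^k * ((k+1:ℕ):ℝ)^(n-k) = ((k+1:ℕ):ℝ)^n := by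
            rw [← pow_add]
            congr 1
            omega
          have hsign : (-1:ℝ)^(n-k) = (-1:ℝ)^(n+1) * (-1:ℝ)^(k+1) := by
            have h2 : (-1:ℝ)^(n-k) * (-1:ℝ)^(k+1) = (-1:ℝ)^(n+1) := by
              rw [← pow_add]
              congr 1
              omega
            have h3 : ((-1:ℝ)^(k+1)) * ((-1:ℝ)^(k+1)) = 1 := by
              rw [← pow_add]; exact Even.neg_one_pow ⟨k+1, by ring⟩
            calc (-1:ℝ)^(n-k) = ((-1:ℝ)^(n-k) * (-1:ℝ)^(k+1)) * (-1:ℝ)^(k+1) := by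
                  rw [mul_assoc, h3, mul_one]
              _ = (-1:ℝ)^(n+1) * (-1:ℝ)^(k+1) := by rw [h2]
          rw [hsign]
          calc ((n+1).choose (k+1) : ℝ) * ((k+1:ℕ):ℝ)^k * ((-1:ℝ)^(n+1) * (-1:ℝ)^(k+1) * ((k+1:ℕ):ℝ)^(n-k))
              = (-1:ℝ)^(n+1) * ((-1:ℝ)^(k+1) * ((n+1).choose (k+1)) * (((k+1:ℕ):ℝ)^k * ((k+1:ℕ):ℝ)^(n-k))) := by ring
            _ = (-1:ℝ)^(n+1) * ((-1:ℝ)^(k+1) * ((n+1).choose (k+1)) * ((k+1:ℕ):ℝ)^n) := by rw [hsplit]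
        rw [Finset.sum_congr rfl this, ← Finset.mul_sum, hfd, mul_zero]
      rw [hcoeff, hP0, hR0, sub_zero]
    rw [heval0, map_zero] at hconst
    exact sub_eq_zero.mp hconst

lemma abel2_eval (n : ℕ) (hn : 1 ≤ n) (y : ℝ) :
    ∑ k ∈ range n, (n.choose (k+1) : ℝ) * ((k+1:ℕ):ℝ)^k * (y - ((k+1:ℕ):ℝ))^(n-1-k)
      = (n:ℝ) * y^(n-1) := by
  have h := congrArg (Polynomial.eval y) (abel2 n hn)
  simpa [Polynomial.eval_finset_sum, mul_assoc] using h

lemma I1ax (n : ℕ) (hn : 1 ≤ n) :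
    (n:ℝ)^n = ∑ k ∈ range n, (n.choose (k+1) : ℝ) * ((k+1:ℕ):ℝ)^k * ((n-(k+1):ℕ):ℝ)^(n-(k+1)) := by
  have h := abel2_eval n hn (n:ℝ)
  have hterm : ∀ k ∈ range n,
      (n.choose (k+1) : ℝ) * ((k+1:ℕ):ℝ)^k * (((n:ℕ):ℝ) - ((k+1:ℕ):ℝ))^(n-1-k)
      = (n.choose (k+1):ℝ) * ((k+1:ℕ):ℝ)^k * ((n-(k+1):ℕ):ℝ)^(n-(k+1)) := by
    intro k hk
    rw [mem_range] at hk
    rw [show n-1-k = n-(k+1) by omega, ← Nat.cast_sub (show k+1 ≤ n by omega)]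
  rw [Finset.sum_congr rfl hterm] at h
  rw [h]
  rw [← pow_succ']
  congr 1
  omega

end AbelPart

section PSPart

open Finset PowerSeries

noncomputable def aa (n : ℕ) : ℝ := (n:ℝ)^n / (n.factorial : ℝ)
noncomputable def tt (n : ℕ) : ℝ := if n = 0 then 0 else (n:ℝ)^(n-1) / (n.factorial : ℝ)
noncomputable def FF : PowerSeries ℝ := PowerSeries.mk aa
noncomputable def TT : PowerSeries ℝ := PowerSeries.mk tt

lemma PS1 : FF * (1 - TT) = 1 := by
  have key : ∀ n : ℕ, 1 ≤ n → (PowerSeries.coeff n) (FF * TT) = aa n := by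
    intro n hn
    rw [PowerSeries.coeff_mul]
    have hc : ∀ p ∈ Finset.HasAntidiagonal.antidiagonal n,
        (PowerSeries.coeff p.1) FF * (PowerSeries.coeff p.2) TT = aa p.1 * tt p.2 := by
      intro p _
      rw [FF, TT, PowerSeries.coeff_mk, PowerSeries.coeff_mk]
    rw [Finset.sum_congr rfl hc, Finset.Nat.sum_antidiagonal_eq_sum_range_succ_mk]
    rw [Finset.sum_range_succ]
    have ht0 : tt (n - n) = 0 := by simp [tt]
    rw [ht0, mul_zero, add_zero]
    dsimp only
    rw [← Finset.sum_range_reflect]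
    have hterm : ∀ k ∈ range n, aa (n-1-k) * tt (n - (n-1-k))
        = ((n.choose (k+1):ℝ) * ((k+1:ℕ):ℝ)^k * ((n-(k+1):ℕ):ℝ)^(n-(k+1))) / (n.factorial : ℝ) := by
      intro k hk
      rw [mem_range] at hk
      have h1 : n - 1 - k = n - (k+1) := by omega
      have h2 : n - (n - (k+1)) = k+1 := by omega
      rw [h1, h2, aa, tt, if_neg (Nat.succ_ne_zero k)]
      rw [Nat.cast_choose ℝ (show k+1 ≤ n by omega)]
      have hf1 : (((k+1).factorial : ℕ):ℝ) ≠ 0 := Nat.cast_ne_zero.mpr (Nat.factorial_ne_zero _)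
      have hf2 : (((n-(k+1)).factorial : ℕ):ℝ) ≠ 0 := Nat.cast_ne_zero.mpr (Nat.factorial_ne_zero _)
      have hf3 : ((n.factorial : ℕ):ℝ) ≠ 0 := Nat.cast_ne_zero.mpr (Nat.factorial_ne_zero _)
      have hred : ((k+1:ℕ):ℝ)^(k+1-1) = ((k+1:ℕ):ℝ)^k := by norm_num
      rw [hred]
      field_simp
    rw [Finset.sum_congr rfl hterm, ← Finset.sum_div, ← I1ax n hn, aa]
  ext n
  rw [mul_sub, mul_one, map_sub]
  rcases Nat.eq_zero_or_pos n with h0 | hpos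
  · subst h0
    simp [FF, TT, aa, tt]
  · rw [key n hpos]
    have hFn : (PowerSeries.coeff n) FF = aa n := by rw [FF, PowerSeries.coeff_mk]
    rw [hFn, sub_self, PowerSeries.coeff_one, if_neg (by omega)]

noncomputable def GG : PowerSeries ℝ := PowerSeries.mk (fun n => (n:ℝ) * aa n)

lemma XdF : X * (d⁄dX ℝ FF) = GG := by
  ext n
  cases n with
  | zero => rw [PowerSeries.coeff_zero_X_mul, GG, PowerSeries.coeff_mk, Nat.cast_zero, zero_mul]
  | succ n =>
    rw [PowerSeries.coeff_succ_X_mul, PowerSeries.coeff_derivative, GG, FF,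
      PowerSeries.coeff_mk, PowerSeries.coeff_mk]
    push_cast
    ring

lemma XdT : X * (d⁄dX ℝ TT) = FF - 1 := by
  ext n
  cases n with
  | zero =>
    rw [PowerSeries.coeff_zero_X_mul, map_sub, PowerSeries.coeff_zero_eq_constantCoeff]
    simp [FF, aa]
  | succ n =>
    rw [PowerSeries.coeff_succ_X_mul, PowerSeries.coeff_derivative, map_sub, TT, FF,
      PowerSeries.coeff_mk, PowerSeries.coeff_mk, PowerSeries.coeff_one,
      if_neg (Nat.succ_ne_zero n), sub_zero]
    rw [tt, if_neg (Nat.succ_ne_zero n), aa, show n+1-1 = n from rfl]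
    have hf : (((n+1).factorial : ℕ):ℝ) ≠ 0 := Nat.cast_ne_zero.mpr (Nat.factorial_ne_zero _)
    field_simp
    rw [pow_succ]
    norm_cast

lemma dF_eq : d⁄dX ℝ FF = FF^2 * (d⁄dX ℝ TT) := by
  have h := congrArg (d⁄dX ℝ) PS1
  simp only [Derivation.leibniz, map_sub, Derivation.map_one_eq_zero, zero_sub,
    smul_eq_mul] at h
  have h2 : (1 - TT) * (d⁄dX ℝ FF) = FF * (d⁄dX ℝ TT) := by
    linear_combination h
  have h3 : FF * ((1 - TT) * (d⁄dX ℝ FF)) = FF * (FF * (d⁄dX ℝ TT)) := by rw [h2]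
  calc d⁄dX ℝ FF = (FF * (1 - TT)) * (d⁄dX ℝ FF) := by rw [PS1, one_mul]
    _ = FF * ((1 - TT) * (d⁄dX ℝ FF)) := by ring
    _ = FF * (FF * (d⁄dX ℝ TT)) := h3
    _ = FF^2 * (d⁄dX ℝ TT) := by ring

lemma GG_eq : GG = FF^3 - FF^2 := by
  rw [← XdF, dF_eq]
  calc X * (FF^2 * (d⁄dX ℝ TT)) = FF^2 * (X * (d⁄dX ℝ TT)) := by ring
    _ = FF^2 * (FF - 1) := by rw [XdT]
    _ = FF^3 - FF^2 := by ring

lemma key_coeff (e k : ℕ) :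
    (k:ℝ) * PowerSeries.coeff k (FF^(e+1))
      = ((e+1:ℕ):ℝ) * (PowerSeries.coeff k (FF^(e+3)) - PowerSeries.coeff k (FF^(e+2))) := by
  have hD : d⁄dX ℝ (FF^(e+1)) = (e+1) • (FF^e * (d⁄dX ℝ FF)) := by
    rw [Derivation.leibniz_pow]
    rw [show e+1-1 = e from rfl]
    rw [smul_eq_mul]
  have hX : X * (d⁄dX ℝ (FF^(e+1))) = (e+1) • (FF^(e+3) - FF^(e+2)) := by
    rw [hD, mul_smul_comm]
    congr 1
    calc X * (FF^e * (d⁄dX ℝ FF)) = FF^e * (X * (d⁄dX ℝ FF)) := by ring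
      _ = FF^e * (FF^3 - FF^2) := by rw [XdF, GG_eq]
      _ = FF^(e+3) - FF^(e+2) := by ring
  have hc := congrArg (PowerSeries.coeff k) hX
  rw [map_nsmul] at hc
  cases k with
  | zero =>
    rw [PowerSeries.coeff_zero_X_mul] at hc
    rw [nsmul_eq_mul, map_sub] at hc
    rw [Nat.cast_zero, zero_mul]
    push_cast at hc ⊢
    linarith [hc]
  | succ n =>
    rw [PowerSeries.coeff_succ_X_mul, PowerSeries.coeff_derivative] at hc
    rw [nsmul_eq_mul, map_sub] at hc
    push_cast at hc ⊢
    linarith [hc]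

lemma sum_adt_succ {M : Type*} [AddCommMonoid M] (d n : ℕ) (f : (Fin (d+1) → ℕ) → M) :
    ∑ j ∈ Finset.Nat.antidiagonalTuple (d+1) n, f j
      = ∑ p ∈ Finset.HasAntidiagonal.antidiagonal n, ∑ j ∈ Finset.Nat.antidiagonalTuple d p.2, f (Fin.cons p.1 j) := by
  rw [← Finset.sum_sigma (Finset.HasAntidiagonal.antidiagonal n)
    (fun p => Finset.Nat.antidiagonalTuple d p.2) (fun x => f (Fin.cons x.1.1 x.2))]
  symm
  apply Finset.sum_bij' (i := fun (x : (_ : ℕ × ℕ) × (Fin d → ℕ)) (_ : x ∈ (Finset.HasAntidiagonal.antidiagonal n).sigma fun p => Finset.Nat.antidiagonalTuple d p.2) => Fin.cons x.1.1 x.2)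
    (j := fun (g : Fin (d+1) → ℕ) (_ : g ∈ Finset.Nat.antidiagonalTuple (d+1) n) =>
      (⟨(g 0, ∑ i : Fin d, g i.succ), Fin.tail g⟩ : (_ : ℕ × ℕ) × (Fin d → ℕ)))
  · intro x hx
    rw [Finset.mem_sigma] at hx
    obtain ⟨h1, h2⟩ := hx
    rw [Finset.Nat.mem_antidiagonalTuple]
    rw [Fin.sum_cons]
    rw [Finset.Nat.mem_antidiagonalTuple] at h2
    rw [h2]
    exact Finset.HasAntidiagonal.mem_antidiagonal.mp h1
  · intro g hg
    rw [Finset.Nat.mem_antidiagonalTuple] at hg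
    rw [Finset.mem_sigma]
    constructor
    · rw [Finset.HasAntidiagonal.mem_antidiagonal]
      rw [← hg, Fin.sum_univ_succ]
    · rw [Finset.Nat.mem_antidiagonalTuple]
      rfl
  · rintro ⟨⟨p1, p2⟩, v⟩ hx
    rw [Finset.mem_sigma] at hx
    obtain ⟨hx1, hx2⟩ := hx
    dsimp only at hx1 hx2
    have hs : ∑ i : Fin d, (Fin.cons p1 v : Fin (d+1) → ℕ) i.succ = p2 := by
      rw [Finset.Nat.mem_antidiagonalTuple] at hx2
      rw [← hx2]
      apply Finset.sum_congr rfl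
      intro i _
      rw [Fin.cons_succ]
    simp only [Fin.cons_zero, Fin.tail_cons, hs]
  · intro g hg
    exact Fin.cons_self_tail g
  · intro x hx
    rfl

lemma coeff_FF_pow : ∀ (m k : ℕ), PowerSeries.coeff k (FF^m)
    = ∑ j ∈ Finset.Nat.antidiagonalTuple m k, ∏ i, aa (j i) := by
  intro m
  induction m with
  | zero =>
    intro k
    cases k with
    | zero =>
      rw [pow_zero, Finset.Nat.antidiagonalTuple_zero_zero]
      simp
    | succ k =>
      rw [pow_zero, Finset.Nat.antidiagonalTuple_zero_succ]
      simp [PowerSeries.coeff_one]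
  | succ m ih =>
    intro k
    rw [pow_succ']
    rw [PowerSeries.coeff_mul]
    rw [sum_adt_succ m k (fun j => ∏ i, aa (j i))]
    apply Finset.sum_congr rfl
    intro p _
    rw [ih p.2]
    have : ∀ j ∈ Finset.Nat.antidiagonalTuple m p.2,
        ∏ i : Fin (m+1), aa ((Fin.cons p.1 j : Fin (m+1) → ℕ) i) = aa p.1 * ∏ i : Fin m, aa (j i) := by
      intro j _
      rw [Fin.prod_univ_succ]
      simp [Fin.cons_zero, Fin.cons_succ]
    rw [Finset.sum_congr rfl this, ← Finset.mul_sum, FF, PowerSeries.coeff_mk]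

end PSPart

/-- `cap_d(k) = (k!/k^k) ∑_{j₁+⋯+j_d=k} ∏_m j_m^{j_m}/j_m!`, the multiplicative Bayes
capacity bound for `k` independent uses of a channel with `d` outputs (with `0^0 = 1`). -/
noncomputable def cap (d k : ℕ) : ℝ :=
  ((Nat.factorial k : ℝ) / (k : ℝ) ^ k) *
    ∑ j ∈ Finset.Nat.antidiagonalTuple d k,
      ∏ m : Fin d, ((j m : ℝ) ^ (j m) / (Nat.factorial (j m) : ℝ))

/-- The recursion `cap_d(k) = cap_{d-1}(k) + (k/(d−2)) cap_{d-2}(k)` for `d > 2`. -/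
theorem cap_recursion (d k : ℕ) (hd : 2 < d) (hk : 1 ≤ k) :
    cap d k = cap (d - 1) k + ((k : ℝ) / ((d : ℝ) - 2)) * cap (d - 2) k := by
  obtain ⟨e, rfl⟩ : ∃ e, d = e + 3 := ⟨d - 3, by omega⟩
  have h1 : e + 3 - 1 = e + 2 := by omega
  have h2 : e + 3 - 2 = e + 1 := by omega
  rw [h1, h2]
  have hcast : ((e+3:ℕ):ℝ) - 2 = ((e+1:ℕ):ℝ) := by push_cast; ring
  rw [hcast]
  have hsum : ∀ m : ℕ, (∑ j ∈ Finset.Nat.antidiagonalTuple m k,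
      ∏ i : Fin m, ((j i : ℝ) ^ (j i) / (Nat.factorial (j i) : ℝ)))
      = PowerSeries.coeff k (FF^m) := by
    intro m
    rw [coeff_FF_pow m k]
    apply Finset.sum_congr rfl
    intro j _
    apply Finset.prod_congr rfl
    intro i _
    rw [aa]
  rw [cap, cap, cap, hsum, hsum, hsum]
  have hkey := key_coeff e k
  have hne : ((e+1:ℕ):ℝ) ≠ 0 := by positivity
  have hcoeff : PowerSeries.coeff k (FF^(e+3))
      = PowerSeries.coeff k (FF^(e+2))
        + (k:ℝ) / ((e+1:ℕ):ℝ) * PowerSeries.coeff k (FF^(e+1)) := by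
    field_simp
    push_cast at hkey ⊢
    linear_combination -hkey
  rw [hcoeff]
  ring
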